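/- arXiv:0903.3267 — 2 statements merged into one kernel-verified Lean document; each statement's English description precedes it below -/
import Mathlib

section
/- Let σ : S → S be a finite-to-one measurable endomorphism of a measure space (S, μ) with μ strongly invariant, i.e., ∫_S (1/D(x)) Σ_{σ(y)=x} f(y) dμ(x) = ∫_S f dμ where D(x) = #{y : σ(y)=x}. Let m be a bounded measurable function on S and define V on L²(μ) by (Vf)(x) = m(x) f(σ(x)). Then the adjoint is (V*f)(x) = (1/D(x)) Σ_{σ(y)=x} m̄(y) f(y). -/
open MeasureTheory
open scoped ComplexConjugate ENNReal

/-!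
Testing strong invariance on indicators of finite-measure pieces of `σ ⁻¹' s`, whose fiber means
are bounded by the indicator of `s`, gives `μ.map σ ≤ μ`; hence `f ∘ σ ∈ L²` and the integrand of
`⟨Vf, g⟩` is integrable. Strong invariance applied to that integrand turns it into its fiber mean,
from which `conj (f x)` factors out because `σ y = x` on the fiber over `x`.
-/

section FiberMean

variable {S : Type*} {σ : S → S} (hfin : ∀ x : S, (σ ⁻¹' {x}).Finite)

noncomputable def fiberMean (f : S → ℂ) (x : S) : ℂ :=
  (1 / (Nat.card (σ ⁻¹' {x}) : ℂ)) * ∑ y ∈ (hfin x).toFinset, f y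

theorem fiberMean_mul_comp (h k : S → ℂ) (x : S) :
    fiberMean hfin (fun y => h (σ y) * k y) x = h x * fiberMean hfin k x := by
  have hfiber : ∀ y ∈ (hfin x).toFinset, h (σ y) * k y = h x * k y := fun y hy => by
    rw [(hfin x).mem_toFinset.mp hy]
  rw [fiberMean, fiberMean, Finset.sum_congr rfl hfiber, ← Finset.mul_sum]
  ring

theorem norm_fiberMean_le {f : S → ℂ} {x : S} {c : ℝ} (hc : 0 ≤ c)
    (hf : ∀ y ∈ σ ⁻¹' {x}, ‖f y‖ ≤ c) : ‖fiberMean hfin f x‖ ≤ c := by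
  have hsum : ‖∑ y ∈ (hfin x).toFinset, f y‖ ≤ (hfin x).toFinset.card * c := by
    refine (norm_sum_le _ _).trans ?_
    simpa using Finset.sum_le_card_nsmul _ _ c fun y hy => hf y ((hfin x).mem_toFinset.mp hy)
  rw [fiberMean, norm_mul, Nat.card_eq_card_finite_toFinset (hfin x), norm_div, norm_one,
    Complex.norm_natCast]
  rcases ((hfin x).toFinset.card).eq_zero_or_pos with hcard | hcard
  · simpa [hcard] using hc
  · rw [div_mul_eq_mul_div, one_mul, div_le_iff₀ (by positivity)]
    linarith

end FiberMean

section StrongInvariance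

variable {S : Type*} [MeasurableSpace S] {μ : Measure S} {σ : S → S}
  {hfin : ∀ x : S, (σ ⁻¹' {x}).Finite}

variable (μ hfin) in
def IsStronglyInvariant : Prop :=
  ∀ f : S → ℂ, Integrable f μ → ∫ x, fiberMean hfin f x ∂μ = ∫ x, f x ∂μ

theorem IsStronglyInvariant.measure_le_of_subset_preimage (hinv : IsStronglyInvariant μ hfin)
    {A s : Set S} (hA : MeasurableSet A) (hAfin : μ A ≠ ∞) (hs : MeasurableSet s)
    (hAs : A ⊆ σ ⁻¹' s) : μ A ≤ μ s := by
  have hbound : ∀ x, ‖fiberMean hfin (A.indicator fun _ => (1 : ℂ)) x‖ₑ ≤ s.indicator 1 x := by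
    intro x
    have hle : ‖fiberMean hfin (A.indicator fun _ => (1 : ℂ)) x‖ ≤ s.indicator 1 x := by
      refine norm_fiberMean_le hfin (Set.indicator_nonneg (fun _ _ => zero_le_one) x)
        fun y (hy : σ y = x) => ?_
      by_cases hyA : y ∈ A
      · simp [hyA, ← hy, Set.mem_preimage.mp (hAs hyA)]
      · simp [hyA, Set.indicator_nonneg]
    rw [← ofReal_norm]
    refine (ENNReal.ofReal_le_ofReal hle).trans_eq ?_
    by_cases hx : x ∈ s <;> simp [hx]
  calc μ A = ‖∫ x, A.indicator (fun _ => (1 : ℂ)) x ∂μ‖ₑ := by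
        rw [integral_indicator_const _ hA, Measure.real, Complex.real_smul, mul_one,
          ← ofReal_norm, Complex.norm_real, Real.norm_of_nonneg ENNReal.toReal_nonneg,
          ENNReal.ofReal_toReal hAfin]
    _ = ‖∫ x, fiberMean hfin (A.indicator fun _ => (1 : ℂ)) x ∂μ‖ₑ := by
        rw [hinv _ ((integrable_indicator_iff hA).mpr (integrableOn_const hAfin))]
    _ ≤ ∫⁻ x, ‖fiberMean hfin (A.indicator fun _ => (1 : ℂ)) x‖ₑ ∂μ :=
        enorm_integral_le_lintegral_enorm _
    _ ≤ ∫⁻ x, s.indicator 1 x ∂μ := lintegral_mono hbound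
    _ = μ s := lintegral_indicator_one hs

theorem IsStronglyInvariant.map_le [SigmaFinite μ] (hinv : IsStronglyInvariant μ hfin)
    (hσ : Measurable σ) : μ.map σ ≤ μ := by
  refine Measure.le_iff.mpr fun s hs => ?_
  rw [Measure.map_apply hσ hs, ← Measure.iSup_restrict_spanningSets]
  refine iSup_le fun n => ?_
  rw [Measure.restrict_apply (hσ hs)]
  exact hinv.measure_le_of_subset_preimage ((hσ hs).inter (measurableSet_spanningSets μ n))
    (measure_spanningSets_lt_top μ n |>.trans_le' (measure_mono Set.inter_subset_right)).ne hs
    Set.inter_subset_left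

theorem MeasureTheory.MemLp.comp_of_map_le {E : Type*} [NormedAddCommGroup E] {p : ℝ≥0∞}
    {f : S → E} (hf : MemLp f p μ) (hσ : Measurable σ) (hle : μ.map σ ≤ μ) : MemLp (f ∘ σ) p μ :=
  (memLp_map_measure_iff (hf.mono_measure hle).1 hσ.aemeasurable).mp (hf.mono_measure hle)

end StrongInvariance

theorem adjoint_of_weighted_composition_general
    {S : Type*} [MeasurableSpace S] (μ : Measure S) [SigmaFinite μ]
    (σ : S → S) (hσm : Measurable σ)
    (hfin : ∀ x : S, (σ ⁻¹' {x}).Finite)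
    -- strong invariance of μ
    (hinv : ∀ f : S → ℂ, Integrable f μ →
      ∫ x, (1 / (Nat.card (σ ⁻¹' {x}) : ℂ)) * ∑ y ∈ (hfin x).toFinset, f y ∂μ
        = ∫ x, f x ∂μ)
    (m : S → ℂ) (hm : Measurable m) (C : ℝ) (hmb : ∀ x, ‖m x‖ ≤ C)
    (f g : S → ℂ) (hf : MemLp f 2 μ) (hg : MemLp g 2 μ) :
    ∫ x, conj (m x * f (σ x)) * g x ∂μ
      = ∫ x, conj (f x) *
          ((1 / (Nat.card (σ ⁻¹' {x}) : ℂ)) *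
            ∑ y ∈ (hfin x).toFinset, conj (m y) * g y) ∂μ := by
  have hstrong : IsStronglyInvariant μ hfin := hinv
  have hfσ : MemLp (conj ∘ f ∘ σ) 2 μ := (hf.comp_of_map_le hσm (hstrong.map_le hσm)).star
  have hint : Integrable (fun x => conj (f (σ x)) * (conj (m x) * g x)) μ := by
    refine (hfσ.integrable_mul hg).bdd_mul hm.aestronglyMeasurable.star
      (.of_forall fun x => (norm_star (m x)).trans_le (hmb x)) |>.congr (.of_forall fun x => ?_)
    simp only [Function.comp_apply, Pi.mul_apply, Pi.star_apply, Complex.star_def]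
    ring
  calc ∫ x, conj (m x * f (σ x)) * g x ∂μ
      = ∫ x, conj (f (σ x)) * (conj (m x) * g x) ∂μ := by
        congr with x
        rw [map_mul]
        ring
    _ = ∫ x, fiberMean hfin (fun y => conj (f (σ y)) * (conj (m y) * g y)) x ∂μ :=
        (hstrong _ hint).symm
    _ = ∫ x, conj (f x) * fiberMean hfin (fun y => conj (m y) * g y) x ∂μ := by
        congr with x
        exact fiberMean_mul_comp hfin (fun z => conj (f z)) _ x

/-- Let `σ : S → S` be a measurable, onto, finite-to-one endomorphism of a
σ-finite measure space `(S, μ)` with `μ` strongly invariant, and let `m` be a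
bounded measurable function. For `(Vf)(x) = m(x) f(σ(x))` on `L²(μ)`, the
adjoint is `(V*g)(x) = (1/D(x)) Σ_{σ(y)=x} conj(m(y)) g(y)`, expressed here by
the adjoint identity `⟨Vf, g⟩ = ⟨f, V*g⟩` in `L²(μ)`. -/
theorem adjoint_of_weighted_composition
    {S : Type*} [MeasurableSpace S] (μ : Measure S) [SigmaFinite μ]
    (σ : S → S) (hσm : Measurable σ) (hσonto : Function.Surjective σ)
    (hfin : ∀ x : S, (σ ⁻¹' {x}).Finite)
    -- strong invariance of μ
    (hinv : ∀ f : S → ℂ, Integrable f μ →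
      ∫ x, (1 / (Nat.card (σ ⁻¹' {x}) : ℂ)) * ∑ y ∈ (hfin x).toFinset, f y ∂μ
        = ∫ x, f x ∂μ)
    (m : S → ℂ) (hm : Measurable m) (C : ℝ) (hmb : ∀ x, ‖m x‖ ≤ C)
    (f g : S → ℂ) (hf : MemLp f 2 μ) (hg : MemLp g 2 μ) :
    ∫ x, conj (m x * f (σ x)) * g x ∂μ
      = ∫ x, conj (f x) *
          ((1 / (Nat.card (σ ⁻¹' {x}) : ℂ)) *
            ∑ y ∈ (hfin x).toFinset, conj (m y) * g y) ∂μ :=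
  adjoint_of_weighted_composition_general μ σ hσm hfin hinv m hm C hmb f g hf hg
end

section
/- On the infinite dyadic tree with unit conductance and origin the empty word, the dipole functions v_x satisfy ⟨v_x, v_y⟩_E = #(γ(x) ∩ γ(y)), the number of common edges in the unique paths from the root to x and to y, for all nonempty finite binary words x, y. -/
/-- Nonempty finite binary words: each such word `w` corresponds to the unique
tree edge `(w.dropLast, w)` joining it to its parent. -/
abbrev TreeEdge := {w : List Bool // w ≠ []}

/-- The energy inner product on the dyadic tree with unit conductance:
`⟨f,g⟩_E = ½ ΣΣ_{x∼y} (f(x)−f(y))(g(x)−g(y))`, written as a sum over edges. -/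
noncomputable def energyInner (f g : List Bool → ℝ) : ℝ :=
  ∑' w : TreeEdge, (f w.1 - f w.1.dropLast) * (g w.1 - g w.1.dropLast)

/-- A function on the tree has finite energy when its edge increments are
square-summable. -/
def FiniteEnergy (f : List Bool → ℝ) : Prop :=
  Summable fun w : TreeEdge => (f w.1 - f w.1.dropLast) ^ 2

/-- The set of edges on the unique path from the root `o = []` to `x`,
identified with the set of nonempty prefixes of `x`. -/
def rootPath (x : List Bool) : Set (List Bool) := {w | w ≠ [] ∧ w <+: x}


/-!
Let `c_x(w) = #(γ(x) ∩ γ(w))`. Along the edge `(w.dropLast, w)` the increment of `c_x` is `1`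
if that edge lies on `γ(x)` and `0` otherwise, so `c_x` has finite energy and its energy pairing
with any `g` telescopes along `γ(x)` to `g(x) − g(o)`. Applying the reproducing property twice,
`⟨v_x, v_y⟩_E = v_y(x) − v_y(o) = ⟨v_y, c_x⟩_E = c_x(y) − c_x(o) = #(γ(x) ∩ γ(y))`.
-/

open Finset

namespace List

variable {α : Type*} [DecidableEq α]

def nonemptyPrefixes (x : List α) : Finset (List α) := x.inits.toFinset.erase []

@[simp]
theorem mem_nonemptyPrefixes {x w : List α} :
    w ∈ x.nonemptyPrefixes ↔ w ≠ [] ∧ w <+: x := by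
  simp [nonemptyPrefixes, mem_inits]

@[simp]
theorem nonemptyPrefixes_nil : ([] : List α).nonemptyPrefixes = ∅ := by
  ext w
  simp [prefix_nil]

theorem nonemptyPrefixes_concat (l : List α) (a : α) :
    (l ++ [a]).nonemptyPrefixes = insert (l ++ [a]) l.nonemptyPrefixes := by
  ext w
  simp only [mem_nonemptyPrefixes, prefix_concat_iff, mem_insert]
  constructor
  · rintro ⟨hw, rfl | hwl⟩
    · exact Or.inl rfl
    · exact Or.inr ⟨hw, hwl⟩
  · rintro (rfl | ⟨hw, hwl⟩)
    · exact ⟨concat_ne_nil a l, Or.inl rfl⟩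
    · exact ⟨hw, Or.inr hwl⟩

theorem concat_notMem_nonemptyPrefixes (l : List α) (a : α) :
    l ++ [a] ∉ l.nonemptyPrefixes := fun h => by
  simpa using (mem_nonemptyPrefixes.1 h).2.length_le

theorem sum_nonemptyPrefixes_sub_dropLast {M : Type*} [AddCommGroup M] (g : List α → M)
    (x : List α) : ∑ w ∈ x.nonemptyPrefixes, (g w - g w.dropLast) = g x - g [] := by
  induction x using reverseRecOn with
  | nil => simp
  | append_singleton l a ih =>
    rw [nonemptyPrefixes_concat, sum_insert (concat_notMem_nonemptyPrefixes l a),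
      dropLast_concat, ih, sub_add_sub_cancel]

theorem card_inter_nonemptyPrefixes_concat (s : Finset (List α)) (l : List α) (a : α) :
    #(s ∩ (l ++ [a]).nonemptyPrefixes) =
      #(s ∩ l.nonemptyPrefixes) + if l ++ [a] ∈ s then 1 else 0 := by
  rw [nonemptyPrefixes_concat]
  split_ifs with h
  · rw [inter_insert_of_mem h, card_insert_of_notMem fun h' =>
      concat_notMem_nonemptyPrefixes l a (mem_inter.1 h').2]
  · rw [inter_insert_of_notMem h, add_zero]

end List

theorem rootPath_eq_nonemptyPrefixes (x : List Bool) : rootPath x = x.nonemptyPrefixes := by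
  ext w
  simp [rootPath]

def pathEdges (x : List Bool) : Finset TreeEdge := x.nonemptyPrefixes.subtype (· ≠ [])

noncomputable def commonEdgeCount (x w : List Bool) : ℝ :=
  #(x.nonemptyPrefixes ∩ w.nonemptyPrefixes)

theorem commonEdgeCount_sub_dropLast (x : List Bool) (e : TreeEdge) :
    commonEdgeCount x e.1 - commonEdgeCount x e.1.dropLast =
      if e ∈ pathEdges x then 1 else 0 := by
  obtain ⟨w, hw⟩ := e
  obtain ⟨l, a, rfl⟩ := (List.eq_nil_or_concat' w).resolve_left hw
  simp only [commonEdgeCount, pathEdges, mem_subtype, List.dropLast_concat,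
    List.card_inter_nonemptyPrefixes_concat]
  split_ifs <;> push_cast <;> ring

theorem finiteEnergy_commonEdgeCount (x : List Bool) : FiniteEnergy (commonEdgeCount x) :=
  summable_of_ne_finset_zero (s := pathEdges x) fun e he => by
    simp [commonEdgeCount_sub_dropLast, he]

theorem energyInner_commonEdgeCount (g : List Bool → ℝ) (x : List Bool) :
    energyInner g (commonEdgeCount x) = g x - g [] := by
  calc energyInner g (commonEdgeCount x)
      = ∑' e : TreeEdge, if e ∈ pathEdges x then g e.1 - g e.1.dropLast else 0 := by
        simp only [energyInner, commonEdgeCount_sub_dropLast, mul_ite, mul_one, mul_zero]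
    _ = ∑ e ∈ pathEdges x, (g e.1 - g e.1.dropLast) := by
        rw [tsum_eq_sum (s := pathEdges x) fun e he => if_neg he]
        exact sum_congr rfl fun e he => if_pos he
    _ = ∑ w ∈ x.nonemptyPrefixes, (g w - g w.dropLast) :=
        sum_subtype_of_mem (fun w => g w - g w.dropLast) fun w hw =>
          (List.mem_nonemptyPrefixes.1 hw).1
    _ = g x - g [] := List.sum_nonemptyPrefixes_sub_dropLast g x

/-- On the dyadic tree with unit conductance, the dipoles `v_x` (the
reproducing vectors for `f ↦ f(x) − f(o)` in the energy Hilbert space) satisfy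
`⟨v_x, v_y⟩_E = #(γ(x) ∩ γ(y))`, the number of common edges of the root paths
to `x` and to `y`, for all nonempty binary words `x, y`. -/
theorem tree_dipole_gram_eq_card_common_path
    (v : List Bool → (List Bool → ℝ))
    (hvE : ∀ x, FiniteEnergy (v x))
    (hrepro : ∀ (x : List Bool) (f : List Bool → ℝ), FiniteEnergy f →
      energyInner (v x) f = f x - f []) :
    ∀ x y : List Bool, x ≠ [] → y ≠ [] →
      energyInner (v x) (v y) = ((rootPath x ∩ rootPath y).ncard : ℝ) := by
  intro x y _ _
  calc energyInner (v x) (v y)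
      = v y x - v y [] := hrepro x (v y) (hvE y)
    _ = energyInner (v y) (commonEdgeCount x) := (energyInner_commonEdgeCount (v y) x).symm
    _ = commonEdgeCount x y - commonEdgeCount x [] :=
        hrepro y (commonEdgeCount x) (finiteEnergy_commonEdgeCount x)
    _ = ((rootPath x ∩ rootPath y).ncard : ℝ) := by
        simp [commonEdgeCount, rootPath_eq_nonemptyPrefixes, ← coe_inter]
end
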